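/- Suppose every edge weight of G is at least 1, the edge e = {u,v} has weight w(u,v) ≤ 3, and Ric_G(e) < 0. Let G* be the graph obtained from G by inserting every permissible pair as a new edge of weight 1. Then there exists a set of permissible pairs, each inserted with some weight ≥ 1, whose insertion yields a graph G'' with Ric_{G''}(e) > 0, if and only if Ric_{G*}(e) > 0. -/
import Mathlib


open Finset
open scoped Classical

variable {V : Type*}

/-- The open neighborhood of `u` in `G`, as a finset. -/
noncomputable def nbrF [Fintype V] (G : SimpleGraph V) (u : V) : Finset V :=
  Finset.univ.filter fun x => G.Adj u x

/-- The degree of `u` in `G`. -/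
noncomputable def degG [Fintype V] (G : SimpleGraph V) (u : V) : ℕ := (nbrF G u).card

/-- The closed neighborhood `N[u]` of `u` in `G`. -/
noncomputable def cnbr [Fintype V] (G : SimpleGraph V) (u : V) : Finset V :=
  insert u (nbrF G u)

/-- The total edge weight of a walk. -/
def walkWeight (G : SimpleGraph V) (w : V → V → ℝ) {x y : V} (p : G.Walk x y) : ℝ :=
  (p.darts.map fun d => w d.toProd.1 d.toProd.2).sum

/-- The weighted distance between `x` and `y`: the infimum of the total weights of
walks from `x` to `y`. -/
noncomputable def wdist (G : SimpleGraph V) (w : V → V → ℝ) (x y : V) : ℝ :=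
  sInf {t | ∃ p : G.Walk x y, walkWeight G w p = t}

/-- A transport plan for `(G,u,v)`: nonnegative, with row sums `1/(deg u + 1)` over
`N[u]` and column sums `1/(deg v + 1)` over `N[v]`. -/
def IsPlanG [Fintype V] (G : SimpleGraph V) (u v : V) (z : V → V → ℝ) : Prop :=
  (∀ x y, 0 ≤ z x y) ∧
  (∀ x ∈ cnbr G u, ∑ y ∈ cnbr G v, z x y = 1 / ((degG G u : ℝ) + 1)) ∧
  (∀ y ∈ cnbr G v, ∑ x ∈ cnbr G u, z x y = 1 / ((degG G v : ℝ) + 1))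

/-- The cost of a transport plan with respect to the weighted distance. -/
noncomputable def planCostW [Fintype V] (G : SimpleGraph V) (w : V → V → ℝ)
    (u v : V) (z : V → V → ℝ) : ℝ :=
  ∑ x ∈ cnbr G u, ∑ y ∈ cnbr G v, wdist G w x y * z x y

/-- The earth mover's distance `EMD_G(u,v)` in the weighted graph `(G,w)`. -/
noncomputable def EMDW [Fintype V] (G : SimpleGraph V) (w : V → V → ℝ) (u v : V) : ℝ :=
  sInf {t | ∃ z, IsPlanG G u v z ∧ planCostW G w u v z = t}

/-- The Ollivier–Ricci curvature of the edge `{u,v}` in the weighted graph `(G,w)`: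
`Ric_G(e) = 1 − EMD_G(u,v)/d_G(u,v)`. -/
noncomputable def RicW [Fintype V] (G : SimpleGraph V) (w : V → V → ℝ) (u v : V) : ℝ :=
  1 - EMDW G w u v / wdist G w u v

/-- The graph obtained from `G` by inserting every permissible pair `{x,y}` with
`x ∈ N_G(u)\{v}`, `y ∈ N_G(v)\{u}`, `x ≠ y`, `{x,y} ∉ E(G)`, as a new edge. -/
def addPerm (G : SimpleGraph V) (u v : V) : SimpleGraph V :=
  G ⊔ SimpleGraph.fromRel (fun x y => G.Adj u x ∧ x ≠ v ∧ G.Adj v y ∧ y ≠ u)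

/- ===================== auxiliary lemmas ===================== -/


def liftW {G1 G2 : SimpleGraph V} (h : G1 ≤ G2) : ∀ {a b : V}, G1.Walk a b → G2.Walk a b
  | _, _, SimpleGraph.Walk.nil => SimpleGraph.Walk.nil
  | _, _, SimpleGraph.Walk.cons had p => SimpleGraph.Walk.cons (h had) (liftW h p)

@[simp] lemma walkWeight_nil (G : SimpleGraph V) (w : V → V → ℝ) (a : V) :
    walkWeight G w (SimpleGraph.Walk.nil : G.Walk a a) = 0 := by simp [walkWeight]

@[simp] lemma walkWeight_cons (G : SimpleGraph V) (w : V → V → ℝ) {a b c : V}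
    (h : G.Adj a b) (p : G.Walk b c) :
    walkWeight G w (SimpleGraph.Walk.cons h p) = w a b + walkWeight G w p := by
  simp [walkWeight]

lemma walkWeight_liftW_le {G1 G2 : SimpleGraph V} (h : G1 ≤ G2) (w1 w2 : V → V → ℝ)
    (hw : ∀ x y, G1.Adj x y → w2 x y ≤ w1 x y) :
    ∀ {a b : V} (p : G1.Walk a b), walkWeight G2 w2 (liftW h p) ≤ walkWeight G1 w1 p
  | _, _, SimpleGraph.Walk.nil => by simp [liftW]
  | _, _, SimpleGraph.Walk.cons had p => by
      simp only [liftW, walkWeight_cons]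
      exact add_le_add (hw _ _ had) (walkWeight_liftW_le h w1 w2 hw p)

lemma walkWeight_liftW_eq {G1 G2 : SimpleGraph V} (h : G1 ≤ G2) (w1 w2 : V → V → ℝ)
    (hw : ∀ x y, G1.Adj x y → w2 x y = w1 x y) :
    ∀ {a b : V} (p : G1.Walk a b), walkWeight G2 w2 (liftW h p) = walkWeight G1 w1 p
  | _, _, SimpleGraph.Walk.nil => by simp [liftW]
  | _, _, SimpleGraph.Walk.cons had p => by
      simp only [liftW, walkWeight_cons]
      rw [hw _ _ had, walkWeight_liftW_eq h w1 w2 hw p]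

lemma walkWeight_nonneg {G : SimpleGraph V} {w : V → V → ℝ}
    (hw : ∀ x y, G.Adj x y → 1 ≤ w x y) :
    ∀ {a b : V} (p : G.Walk a b), 0 ≤ walkWeight G w p
  | _, _, SimpleGraph.Walk.nil => by simp
  | _, _, SimpleGraph.Walk.cons had p => by
      have h1 := hw _ _ had
      have h2 := walkWeight_nonneg hw p
      simp only [walkWeight_cons]; linarith

lemma exists_walk_down {G1 G2 : SimpleGraph V} (w1 w2 : V → V → ℝ)
    (hw : ∀ x y, G1.Adj x y → w1 x y = w2 x y) :
    ∀ {a b : V} (p : G2.Walk a b),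
      (∀ d ∈ p.darts, G1.Adj d.toProd.1 d.toProd.2) →
      ∃ q : G1.Walk a b, walkWeight G1 w1 q = walkWeight G2 w2 p
  | _, _, SimpleGraph.Walk.nil, _ => ⟨SimpleGraph.Walk.nil, by simp⟩
  | _, _, SimpleGraph.Walk.cons had p, hd => by
      have h1 : G1.Adj _ _ := hd ⟨(_, _), had⟩ (by simp)
      obtain ⟨q, hq⟩ := exists_walk_down w1 w2 hw p (fun d hdm => hd d (by simp [hdm]))
      exact ⟨SimpleGraph.Walk.cons h1 q, by simp [hq, hw _ _ h1]⟩

lemma addPerm_adj {G : SimpleGraph V} {u v x y : V} :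
    (addPerm G u v).Adj x y ↔ G.Adj x y ∨ (x ≠ y ∧
      ((G.Adj u x ∧ x ≠ v ∧ G.Adj v y ∧ y ≠ u) ∨ (G.Adj u y ∧ y ≠ v ∧ G.Adj v x ∧ x ≠ u))) := by
  simp [addPerm, SimpleGraph.fromRel_adj]

lemma addPerm_adj_u {G : SimpleGraph V} {u v x : V} :
    (addPerm G u v).Adj u x ↔ G.Adj u x := by
  rw [addPerm_adj]
  constructor
  · rintro (h | ⟨hne, (⟨h1, _⟩ | ⟨_, _, _, h4⟩)⟩)
    · exact h
    · exact absurd h1 (G.irrefl)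
    · exact absurd rfl h4
  · exact Or.inl

lemma addPerm_adj_v {G : SimpleGraph V} {u v y : V} :
    (addPerm G u v).Adj v y ↔ G.Adj v y := by
  rw [addPerm_adj]
  constructor
  · rintro (h | ⟨hne, (⟨_, h2, _⟩ | ⟨_, _, h3, _⟩)⟩)
    · exact h
    · exact absurd rfl h2
    · exact absurd h3 (G.irrefl)
  · exact Or.inl

lemma addPerm_new_avoid {G : SimpleGraph V} {u v x y : V}
    (h : (addPerm G u v).Adj x y) (hG : ¬ G.Adj x y) :
    x ≠ u ∧ x ≠ v ∧ y ≠ u ∧ y ≠ v := by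
  rw [addPerm_adj] at h
  rcases h with h | ⟨hne, (⟨h1, h2, h3, h4⟩ | ⟨h1, h2, h3, h4⟩)⟩
  · exact absurd h hG
  · exact ⟨h1.ne', h2, h4, h3.ne'⟩
  · exact ⟨h4, h3.ne', h1.ne', h2⟩

lemma bad_walk_two {G : SimpleGraph V} {u v : V} {ws : V → V → ℝ}
    (hws1 : ∀ x y, (addPerm G u v).Adj x y → 1 ≤ ws x y) :
    ∀ {a : V} (p : (addPerm G u v).Walk a v),
      (∃ d ∈ p.darts, ¬ G.Adj d.toProd.1 d.toProd.2) →
      2 ≤ walkWeight (addPerm G u v) ws p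
  | _, SimpleGraph.Walk.nil, hbad => by simp at hbad
  | _, SimpleGraph.Walk.cons had p, hbad => by
      simp only [walkWeight_cons]
      obtain ⟨d, hdm, hdbad⟩ := hbad
      rw [SimpleGraph.Walk.darts_cons, List.mem_cons] at hdm
      rcases hdm with rfl | hdm
      · obtain ⟨_, _, hcu, hcv⟩ := addPerm_new_avoid had hdbad
        have h1 := hws1 _ _ had
        cases p with
        | nil => exact absurd rfl hcv
        | cons had2 q =>
            have h2 := hws1 _ _ had2
            have h3 := walkWeight_nonneg hws1 q
            simp only [walkWeight_cons]; linarith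
      · have h2 := bad_walk_two hws1 p ⟨d, hdm, hdbad⟩
        have h1 := hws1 _ _ had
        linarith

lemma bad_walk_three {G : SimpleGraph V} {u v : V} {ws : V → V → ℝ}
    (huv : G.Adj u v)
    (hws1 : ∀ x y, (addPerm G u v).Adj x y → 1 ≤ ws x y)
    (p : (addPerm G u v).Walk u v)
    (hbad : ∃ d ∈ p.darts, ¬ G.Adj d.toProd.1 d.toProd.2) :
    3 ≤ walkWeight (addPerm G u v) ws p := by
  cases p with
  | nil => exact absurd rfl huv.ne
  | cons had q =>
      obtain ⟨d, hdm, hdbad⟩ := hbad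
      rw [SimpleGraph.Walk.darts_cons, List.mem_cons] at hdm
      rcases hdm with rfl | hdm
      · exact absurd (addPerm_adj_u.mp had) hdbad
      · have h2 := bad_walk_two hws1 q ⟨d, hdm, hdbad⟩
        have h1 := hws1 _ _ had
        simp only [walkWeight_cons]; linarith

section Main

variable {G : SimpleGraph V} {w : V → V → ℝ} {u v : V}
variable {G'' : SimpleGraph V} {w'' : V → V → ℝ}

/-- weight on G'' edges is at least 1 -/
lemma w''_one (hw1 : ∀ x y, G.Adj x y → 1 ≤ w x y)
    (hagree : ∀ x y, G.Adj x y → w'' x y = w x y)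
    (hnew : ∀ x y, G''.Adj x y → ¬ G.Adj x y → 1 ≤ w'' x y) :
    ∀ x y, G''.Adj x y → 1 ≤ w'' x y := by
  intro x y h
  by_cases hG : G.Adj x y
  · rw [hagree _ _ hG]; exact hw1 _ _ hG
  · exact hnew _ _ h hG

lemma ws_one (hw1 : ∀ x y, G.Adj x y → 1 ≤ w x y) :
    ∀ x y, (addPerm G u v).Adj x y →
      1 ≤ (fun x y => if G.Adj x y then w x y else 1) x y := by
  intro x y _
  by_cases hG : G.Adj x y
  · simpa [hG] using hw1 _ _ hG
  · simp [hG]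

/-- `wdist` over `G''` equals `wdist` over `G` at the pair `(u,v)`. -/
lemma wdist_uv_eq (huv : G.Adj u v)
    (hw1 : ∀ x y, G.Adj x y → 1 ≤ w x y) (huv3 : w u v ≤ 3)
    (h1 : G ≤ G'') (h2 : G'' ≤ addPerm G u v)
    (hagree : ∀ x y, G.Adj x y → w'' x y = w x y)
    (hnew : ∀ x y, G''.Adj x y → ¬ G.Adj x y → 1 ≤ w'' x y) :
    wdist G'' w'' u v = wdist G w u v := by
  set ws : V → V → ℝ := fun x y => if G.Adj x y then w x y else 1 with hwsdef
  have hws1 := ws_one (u := u) (v := v) hw1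
  have hw''1 := w''_one hw1 hagree hnew
  set A := {t | ∃ p : G.Walk u v, walkWeight G w p = t} with hA
  set B := {t | ∃ p : G''.Walk u v, walkWeight G'' w'' p = t} with hB
  have hAbdd : BddBelow A := ⟨0, by rintro t ⟨p, rfl⟩; exact walkWeight_nonneg hw1 p⟩
  have hBbdd : BddBelow B := ⟨0, by rintro t ⟨p, rfl⟩; exact walkWeight_nonneg hw''1 p⟩
  have hAne : A.Nonempty :=
    ⟨_, SimpleGraph.Walk.cons huv SimpleGraph.Walk.nil, rfl⟩
  have hAsubB : A ⊆ B := by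
    rintro t ⟨p, rfl⟩
    exact ⟨liftW h1 p, walkWeight_liftW_eq h1 w w'' (fun x y h => hagree x y h) p⟩
  have hedge : sInf A ≤ w u v := by
    have : w u v ∈ A := ⟨SimpleGraph.Walk.cons huv SimpleGraph.Walk.nil, by simp⟩
    exact csInf_le hAbdd this
  have hle1 : sInf B ≤ sInf A := csInf_le_csInf hBbdd hAne hAsubB
  have hle2 : sInf A ≤ sInf B := by
    refine le_csInf (hAne.mono hAsubB) ?_
    rintro t ⟨p, rfl⟩
    -- lift p to the full graph addPerm
    have hstep : walkWeight (addPerm G u v) ws (liftW h2 p) ≤ walkWeight G'' w'' p := by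
      refine walkWeight_liftW_le h2 w'' ws ?_ p
      intro x y h
      by_cases hG : G.Adj x y
      · simp [hwsdef, hG, hagree _ _ hG]
      · simpa [hwsdef, hG] using hnew _ _ h hG
    by_cases hall : ∀ d ∈ (liftW h2 p).darts, G.Adj d.toProd.1 d.toProd.2
    · obtain ⟨q, hq⟩ := exists_walk_down w ws (fun x y h => by simp [hwsdef, h]) (liftW h2 p) hall
      calc sInf A ≤ walkWeight G w q := csInf_le hAbdd ⟨q, rfl⟩
        _ = walkWeight (addPerm G u v) ws (liftW h2 p) := hq
        _ ≤ walkWeight G'' w'' p := hstep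
    · push_neg at hall
      have h3 := bad_walk_three huv (ws := ws) (ws_one hw1) (liftW h2 p) hall
      calc sInf A ≤ w u v := hedge
        _ ≤ 3 := huv3
        _ ≤ walkWeight (addPerm G u v) ws (liftW h2 p) := h3
        _ ≤ walkWeight G'' w'' p := hstep
  exact le_antisymm hle1 hle2

/-- wdist in the fully-augmented graph is at most wdist in any intermediate graph,
at pairs joined by a `G`-walk. -/
lemma wdist_star_le (hw1 : ∀ x y, G.Adj x y → 1 ≤ w x y)
    (h1 : G ≤ G'') (h2 : G'' ≤ addPerm G u v)
    (hagree : ∀ x y, G.Adj x y → w'' x y = w x y)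
    (hnew : ∀ x y, G''.Adj x y → ¬ G.Adj x y → 1 ≤ w'' x y)
    {x y : V} (hreach : Nonempty (G.Walk x y)) :
    wdist (addPerm G u v) (fun x y => if G.Adj x y then w x y else 1) x y ≤
      wdist G'' w'' x y := by
  set ws : V → V → ℝ := fun x y => if G.Adj x y then w x y else 1 with hwsdef
  have hws1 := ws_one (u := u) (v := v) hw1
  obtain ⟨q0⟩ := hreach
  have hBne : {t | ∃ p : G''.Walk x y, walkWeight G'' w'' p = t}.Nonempty :=
    ⟨_, liftW h1 q0, rfl⟩
  refine le_csInf hBne ?_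
  rintro t ⟨p, rfl⟩
  have hstep : walkWeight (addPerm G u v) ws (liftW h2 p) ≤ walkWeight G'' w'' p := by
    refine walkWeight_liftW_le h2 w'' ws ?_ p
    intro a b h
    by_cases hG : G.Adj a b
    · simp [hwsdef, hG, hagree _ _ hG]
    · simpa [hwsdef, hG] using hnew _ _ h hG
  have hbdd : BddBelow {t | ∃ p : (addPerm G u v).Walk x y,
      walkWeight (addPerm G u v) ws p = t} :=
    ⟨0, by rintro t ⟨p, rfl⟩; exact walkWeight_nonneg hws1 p⟩
  exact le_trans (csInf_le hbdd ⟨liftW h2 p, rfl⟩) hstep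

lemma wdist_nonneg {H : SimpleGraph V} {wH : V → V → ℝ}
    (hw1 : ∀ x y, H.Adj x y → 1 ≤ wH x y) (x y : V) : 0 ≤ wdist H wH x y :=
  Real.sInf_nonneg (by rintro t ⟨p, rfl⟩; exact walkWeight_nonneg hw1 p)

end Main
section Main2

variable {G : SimpleGraph V} {w : V → V → ℝ} {u v : V}
variable {G'' : SimpleGraph V} {w'' : V → V → ℝ}

lemma nbrF_u_eq [Fintype V] (h1 : G ≤ G'') (h2 : G'' ≤ addPerm G u v) :
    nbrF G'' u = nbrF G u := by
  ext x; simp only [nbrF, mem_filter, mem_univ, true_and]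
  exact ⟨fun h => addPerm_adj_u.mp (h2 h), fun h => h1 h⟩

lemma nbrF_v_eq [Fintype V] (h1 : G ≤ G'') (h2 : G'' ≤ addPerm G u v) :
    nbrF G'' v = nbrF G v := by
  ext x; simp only [nbrF, mem_filter, mem_univ, true_and]
  exact ⟨fun h => addPerm_adj_v.mp (h2 h), fun h => h1 h⟩

lemma isPlan_iff [Fintype V] (h1 : G ≤ G'') (h2 : G'' ≤ addPerm G u v) (z : V → V → ℝ) :
    IsPlanG G'' u v z ↔ IsPlanG G u v z := by
  unfold IsPlanG cnbr degG
  rw [nbrF_u_eq h1 h2, nbrF_v_eq h1 h2]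

lemma card_cnbr [Fintype V] (H : SimpleGraph V) (a : V) :
    (cnbr H a).card = degG H a + 1 := by
  rw [cnbr, card_insert_of_notMem (by simp [nbrF]), degG]

lemma exists_plan [Fintype V] (G : SimpleGraph V) (u v : V) :
    IsPlanG G u v (fun _ _ => 1 / (((degG G u : ℝ) + 1) * ((degG G v : ℝ) + 1))) := by
  have hdu : ((degG G u : ℝ) + 1) ≠ 0 := by positivity
  have hdv : ((degG G v : ℝ) + 1) ≠ 0 := by positivity
  refine ⟨fun x y => by positivity, ?_, ?_⟩
  · intro x _
    rw [Finset.sum_const, card_cnbr, nsmul_eq_mul]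
    push_cast
    field_simp
  · intro y _
    rw [Finset.sum_const, card_cnbr, nsmul_eq_mul]
    push_cast
    field_simp

lemma one_le_wdist (huv : G.Adj u v) (hw1 : ∀ x y, G.Adj x y → 1 ≤ w x y) :
    1 ≤ wdist G w u v := by
  refine le_csInf ⟨_, SimpleGraph.Walk.cons huv SimpleGraph.Walk.nil, rfl⟩ ?_
  rintro t ⟨p, rfl⟩
  cases p with
  | nil => exact absurd rfl huv.ne
  | cons had q =>
      have h1 := hw1 _ _ had
      have h2 := walkWeight_nonneg hw1 q
      simp only [walkWeight_cons]; linarith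

lemma EMD_star_le [Fintype V] (huv : G.Adj u v)
    (hw1 : ∀ x y, G.Adj x y → 1 ≤ w x y)
    (h1 : G ≤ G'') (h2 : G'' ≤ addPerm G u v)
    (hagree : ∀ x y, G.Adj x y → w'' x y = w x y)
    (hnew : ∀ x y, G''.Adj x y → ¬ G.Adj x y → 1 ≤ w'' x y) :
    EMDW (addPerm G u v) (fun x y => if G.Adj x y then w x y else 1) u v ≤
      EMDW G'' w'' u v := by
  set Gs := addPerm G u v with hGs
  set ws : V → V → ℝ := fun x y => if G.Adj x y then w x y else 1 with hwsdef
  have hws1 : ∀ x y, Gs.Adj x y → 1 ≤ ws x y := ws_one hw1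
  have hGle : G ≤ Gs := le_sup_left
  have hcuS : cnbr Gs u = cnbr G u := by
    rw [cnbr, cnbr, nbrF_u_eq hGle (le_refl Gs)]
  have hcvS : cnbr Gs v = cnbr G v := by
    rw [cnbr, cnbr, nbrF_v_eq hGle (le_refl Gs)]
  have hcu'' : cnbr G'' u = cnbr G u := by rw [cnbr, cnbr, nbrF_u_eq h1 h2]
  have hcv'' : cnbr G'' v = cnbr G v := by rw [cnbr, cnbr, nbrF_v_eq h1 h2]
  have hbdd : BddBelow {t | ∃ z, IsPlanG Gs u v z ∧ planCostW Gs ws u v z = t} := by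
    refine ⟨0, ?_⟩
    rintro t ⟨z, hz, rfl⟩
    refine Finset.sum_nonneg fun x _ => Finset.sum_nonneg fun y _ => ?_
    exact mul_nonneg (wdist_nonneg hws1 x y) (hz.1 x y)
  have hne : {t | ∃ z, IsPlanG G'' u v z ∧ planCostW G'' w'' u v z = t}.Nonempty :=
    ⟨_, _, exists_plan G'' u v, rfl⟩
  refine le_csInf hne ?_
  rintro t ⟨z, hz, rfl⟩
  have hzS : IsPlanG Gs u v z :=
    (isPlan_iff hGle (le_refl Gs) z).mpr ((isPlan_iff h1 h2 z).mp hz)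
  have hcost : planCostW Gs ws u v z ≤ planCostW G'' w'' u v z := by
    unfold planCostW
    rw [hcuS, hcvS, hcu'', hcv'']
    refine Finset.sum_le_sum fun x hx => Finset.sum_le_sum fun y hy => ?_
    refine mul_le_mul_of_nonneg_right ?_ (hz.1 x y)
    have hxu : G.Reachable x u := by
      rcases Finset.mem_insert.mp hx with rfl | hx
      · exact SimpleGraph.Reachable.refl x
      · have : G.Adj u x := by simpa [nbrF] using hx
        exact this.symm.reachable
    have hvy : G.Reachable v y := by
      rcases Finset.mem_insert.mp hy with rfl | hy
      · exact SimpleGraph.Reachable.refl y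
      · have : G.Adj v y := by simpa [nbrF] using hy
        exact this.reachable
    have hreach : G.Reachable x y := hxu.trans (huv.reachable.trans hvy)
    exact wdist_star_le hw1 h1 h2 hagree hnew hreach
  calc sInf {t | ∃ z, IsPlanG Gs u v z ∧ planCostW Gs ws u v z = t}
      ≤ planCostW Gs ws u v z := csInf_le hbdd ⟨z, hzS, rfl⟩
    _ ≤ planCostW G'' w'' u v z := hcost

end Main2
/-- suppose every edge weight of `G` is at least `1`, the edge
`e = {u,v}` has weight at most `3`, and `Ric_G(e) < 0`.  Then some set of permissible
pairs, each inserted with some weight `≥ 1`, yields a graph with positive curvature of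
`e` iff the graph `G*` obtained by inserting every permissible pair with weight `1`
has positive curvature of `e`.  (A graph `G''` with `G ≤ G'' ≤ G*`, together with a
weight function agreeing with `w` on `E(G)` and `≥ 1` on the new edges, is exactly the
result of inserting a set of permissible pairs with weights `≥ 1`.) -/
theorem stmt19 [Fintype V] (G : SimpleGraph V) (w : V → V → ℝ) (u v : V)
    (huv : G.Adj u v) (hdeg : degG G u ≤ degG G v)
    (hwsym : ∀ x y, w x y = w y x)
    (hw1 : ∀ x y, G.Adj x y → 1 ≤ w x y)
    (huv3 : w u v ≤ 3)
    (hneg : RicW G w u v < 0) :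
    (∃ (G'' : SimpleGraph V) (w'' : V → V → ℝ),
        G ≤ G'' ∧ G'' ≤ addPerm G u v ∧
        (∀ x y, w'' x y = w'' y x) ∧
        (∀ x y, G.Adj x y → w'' x y = w x y) ∧
        (∀ x y, G''.Adj x y → ¬ G.Adj x y → 1 ≤ w'' x y) ∧
        0 < RicW G'' w'' u v) ↔
      0 < RicW (addPerm G u v) (fun x y => if G.Adj x y then w x y else 1) u v := by
  have hGle : G ≤ addPerm G u v := le_sup_left
  have hsAgree : ∀ x y, G.Adj x y →
      (fun x y => if G.Adj x y then w x y else 1) x y = w x y := fun x y h => by simp [h]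
  have hsNew : ∀ x y, (addPerm G u v).Adj x y → ¬ G.Adj x y →
      1 ≤ (fun x y => if G.Adj x y then w x y else 1) x y := fun x y _ hG => by simp [hG]
  constructor
  · rintro ⟨G'', w'', h1, h2, h''sym, hagree, hnew, hpos⟩
    have hd'' : wdist G'' w'' u v = wdist G w u v :=
      wdist_uv_eq huv hw1 huv3 h1 h2 hagree hnew
    have hdS : wdist (addPerm G u v) (fun x y => if G.Adj x y then w x y else 1) u v =
        wdist G w u v :=
      wdist_uv_eq huv hw1 huv3 hGle (le_refl _) hsAgree hsNew
    have hd1 : 1 ≤ wdist G w u v := one_le_wdist huv hw1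
    have hdpos : 0 < wdist G w u v := by linarith
    have hE : EMDW (addPerm G u v) (fun x y => if G.Adj x y then w x y else 1) u v ≤
        EMDW G'' w'' u v := EMD_star_le huv hw1 h1 h2 hagree hnew
    rw [RicW, hd''] at hpos
    have h5 : EMDW G'' w'' u v < wdist G w u v := (div_lt_one hdpos).mp (by linarith)
    rw [RicW, hdS]
    have h6 : EMDW (addPerm G u v) (fun x y => if G.Adj x y then w x y else 1) u v /
        wdist G w u v < 1 := (div_lt_one hdpos).mpr (lt_of_le_of_lt hE h5)
    linarith
  · intro h
    refine ⟨addPerm G u v, fun x y => if G.Adj x y then w x y else 1, hGle, le_refl _,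
      ?_, hsAgree, hsNew, h⟩
    intro x y
    by_cases hxy : G.Adj x y
    · simp [hxy, hxy.symm, hwsym x y]
    · have hyx : ¬ G.Adj y x := fun hh => hxy hh.symm
      simp [hxy, hyx]
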